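/- arXiv:1201.5817 — 2 statements merged into one kernel-verified Lean document; each statement's English description precedes it below -/
import Mathlib

section
/- Let a, b, c, d be integers, let α = ⟨a, b, c, d⟩ : Quaternion ℤ, and let δ be the vector product of α, b − a i = ⟨b, −a, 0, 0⟩, and d j − c k = ⟨0, 0, d, −c⟩, i.e. a Lipschitz integer such that for every x : Quaternion ℤ, (δ * star x).re equals the determinant of the 4×4 integer matrix whose rows are the coordinate vectors ![re, imI, imJ, imK] of α, ⟨b,−a,0,0⟩, ⟨0,0,d,−c⟩, x, in this order. Then δ = α * ((−j) * (a + b i) * (c − d i)) and δ = ((a + b i) * (c + d i) * (−j)) * α, where i = ⟨0,1,0,0⟩, j = ⟨0,0,1,0⟩, and a + b i = ⟨a,b,0,0⟩, c ± d i = ⟨c,±d,0,0⟩. -/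
/-!
Since `(δ * star x).re` is the coordinate dot product of `δ` and `x`, the defining identity
determines `δ` uniquely: it is the vector of cofactors of the last row, i.e. the determinants
obtained by putting `1, i, j, k` in the last row. For `α = ⟨a, b, c, d⟩`, `b - a i` and `d j - c k`
these are `⟨(c² + d²) a, (c² + d²) b, -(a² + b²) c, -(a² + b²) d⟩`, and both quaternion products
expand to the same four coordinates.
-/

/-- The coordinate vector of a Lipschitz integer. -/
def coords (q : Quaternion ℤ) : Fin 4 → ℤ := ![q.re, q.imI, q.imJ, q.imK]

namespace Quaternion

variable {R : Type*} [CommRing R]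

theorem re_mul_star (p q : Quaternion R) :
    (p * star q).re = p.re * q.re + p.imI * q.imI + p.imJ * q.imJ + p.imK * q.imK := by
  simp only [re_mul, re_star, imI_star, imJ_star, imK_star]
  ring

theorem eq_of_forall_re_mul_star_eq {p q : Quaternion R}
    (h : ∀ x : Quaternion R, (p * star x).re = (q * star x).re) : p = q := by
  simp only [re_mul_star] at h
  ext
  · simpa using h ⟨1, 0, 0, 0⟩
  · simpa using h ⟨0, 1, 0, 0⟩
  · simpa using h ⟨0, 0, 1, 0⟩
  · simpa using h ⟨0, 0, 0, 1⟩

end Quaternion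

def vectorProduct (α β γ : Quaternion ℤ) : Quaternion ℤ :=
  let M : Quaternion ℤ → ℤ := fun x => (Matrix.of ![coords α, coords β, coords γ, coords x]).det
  ⟨M ⟨1, 0, 0, 0⟩, M ⟨0, 1, 0, 0⟩, M ⟨0, 0, 1, 0⟩, M ⟨0, 0, 0, 1⟩⟩

theorem re_mul_star_vectorProduct (α β γ x : Quaternion ℤ) :
    (vectorProduct α β γ * star x).re =
      (Matrix.of ![coords α, coords β, coords γ, coords x]).det := by
  rw [Quaternion.re_mul_star]
  simp [vectorProduct, coords, Matrix.det_succ_row_zero, Fin.sum_univ_succ, Fin.succAbove]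
  ring

theorem eq_vectorProduct_of_forall {α β γ δ : Quaternion ℤ}
    (h : ∀ x : Quaternion ℤ,
      (δ * star x).re = (Matrix.of ![coords α, coords β, coords γ, coords x]).det) :
    δ = vectorProduct α β γ :=
  Quaternion.eq_of_forall_re_mul_star_eq fun x => by rw [h, re_mul_star_vectorProduct]

theorem vectorProduct_beta2_beta3 (a b c d : ℤ) :
    vectorProduct ⟨a, b, c, d⟩ ⟨b, -a, 0, 0⟩ ⟨0, 0, d, -c⟩ =
      ⟨(c ^ 2 + d ^ 2) * a, (c ^ 2 + d ^ 2) * b, -((a ^ 2 + b ^ 2) * c), -((a ^ 2 + b ^ 2) * d)⟩ := by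
  ext <;> simp [vectorProduct, coords, Matrix.det_succ_row_zero, Fin.sum_univ_succ, Fin.succAbove] <;>
    ring

theorem vectorProduct_alpha_beta2_beta3 (a b c d : ℤ) (α δ j zI wI wIc : Quaternion ℤ)
    (hα : α = ⟨a, b, c, d⟩) (hj : j = ⟨0, 0, 1, 0⟩)
    (hzI : zI = ⟨a, b, 0, 0⟩) (hwI : wI = ⟨c, d, 0, 0⟩) (hwIc : wIc = ⟨c, -d, 0, 0⟩)
    (hδ : ∀ x : Quaternion ℤ,
      (δ * star x).re =
        (Matrix.of ![coords α, coords ⟨b, -a, 0, 0⟩, coords ⟨0, 0, d, -c⟩, coords x]).det) :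
    δ = α * ((-j) * zI * wIc) ∧ δ = (zI * wI * (-j)) * α := by
  rw [eq_vectorProduct_of_forall hδ]
  -- Expand the products before substituting: `Quaternion.re_mul` and friends do not fire on
  -- products of anonymous-constructor literals.
  simp only [Quaternion.ext_iff, Quaternion.re_mul, Quaternion.imI_mul, Quaternion.imJ_mul,
    Quaternion.imK_mul, Quaternion.re_neg, Quaternion.imI_neg, Quaternion.imJ_neg,
    Quaternion.imK_neg]
  subst hα hj hzI hwI hwIc
  simp only [vectorProduct_beta2_beta3]
  constructor <;> refine ⟨?_, ?_, ?_, ?_⟩ <;> ring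
end

section
/- Let α, β, γ, δ be Lipschitz integers and let ε be the vector product of αβ, αγ, and δ, i.e. a Lipschitz integer such that for every x : Quaternion ℤ, (ε * star x).re equals the determinant of the 4×4 integer matrix whose rows are the coordinate vectors ![re, imI, imJ, imK] of α * β, α * γ, δ, x, in this order. Then ε is a right multiple of α: there exists a Lipschitz integer λ with ε = α * λ. -/
open Matrix

namespace Quaternion

variable {R : Type*} [CommRing R]

theorem re_mul_comm (a b : ℍ[R]) : (a * b).re = (b * a).re := by
  simp only [re_mul]; ring

theorem re_mul_star_eq_dotProduct (p x : ℍ[R]) :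
    (p * star x).re = equivTuple R p ⬝ᵥ equivTuple R x := by
  simp [re_mul, dotProduct, Fin.sum_univ_four, equivTuple_apply]

theorem eq_of_re_mul_star {p q : ℍ[R]} (h : ∀ x, (p * star x).re = (q * star x).re) :
    p = q :=
  (equivTuple R).injective <| dotProduct_eq _ _ fun u => by
    simpa only [re_mul_star_eq_dotProduct, Equiv.apply_symm_apply] using h ((equivTuple R).symm u)

def coordDet (a b c d : ℍ[R]) : R :=
  (of ![equivTuple R a, equivTuple R b, equivTuple R c, equivTuple R d]).det

def vectorProduct (a b c : ℍ[R]) : ℍ[R] :=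
  (equivTuple R).symm fun j =>
    (of ![equivTuple R a, equivTuple R b, equivTuple R c, Pi.single j 1]).det

theorem re_vectorProduct_mul_star (a b c x : ℍ[R]) :
    (vectorProduct a b c * star x).re = coordDet a b c x := by
  rw [re_mul_star_eq_dotProduct, coordDet, det_eq_sum_mul_adjugate_row _ 3, dotProduct_comm,
    vectorProduct, Equiv.apply_symm_apply, dotProduct]
  refine Finset.sum_congr rfl fun j _ => congrArg _ ?_
  -- the cofactors along the last row do not depend on that row
  rw [adjugate_apply]
  congr 1
  ext i k
  fin_cases i <;> simp

theorem coordDet_zero_left (b c d : ℍ[R]) : coordDet 0 b c d = 0 :=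
  det_eq_zero_of_row_eq_zero 0 fun j => by fin_cases j <;> rfl

def leftMulMatrix (a : ℍ[R]) : Matrix (Fin 4) (Fin 4) R :=
  !![a.re, -a.imI, -a.imJ, -a.imK;
     a.imI, a.re, -a.imK, a.imJ;
     a.imJ, a.imK, a.re, -a.imI;
     a.imK, -a.imJ, a.imI, a.re]

theorem equivTuple_mul (a q : ℍ[R]) :
    equivTuple R (a * q) = leftMulMatrix a *ᵥ equivTuple R q := by
  ext i
  fin_cases i <;> simp [leftMulMatrix, equivTuple_apply, mulVec, dotProduct, Fin.sum_univ_four] <;>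
    ring

theorem det_leftMulMatrix (a : ℍ[R]) : (leftMulMatrix a).det = normSq a ^ 2 := by
  simp [leftMulMatrix, det_succ_row_zero, Fin.sum_univ_succ, normSq_def', Fin.succAbove]
  ring

theorem coordDet_mul_left (α a b c d : ℍ[R]) :
    coordDet (α * a) (α * b) (α * c) (α * d) = normSq α ^ 2 * coordDet a b c d := by
  have hrows : of ![equivTuple R (α * a), equivTuple R (α * b), equivTuple R (α * c),
        equivTuple R (α * d)] =
      of ![equivTuple R a, equivTuple R b, equivTuple R c, equivTuple R d] *
        (leftMulMatrix α)ᵀ := by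
    ext i j
    simp only [equivTuple_mul]
    fin_cases i <;> simp [mulVec, mul_apply, dotProduct, mul_comm]
  rw [coordDet, hrows, det_mul, det_transpose, det_leftMulMatrix, mul_comm, coordDet]

theorem coordDet_smul_smul (r : R) (a b c d : ℍ[R]) :
    coordDet a b (r • c) (r • d) = r ^ 2 * coordDet a b c d := by
  have hrows : of ![equivTuple R a, equivTuple R b, equivTuple R (r • c), equivTuple R (r • d)] =
      of fun i j => ![1, 1, r, r] i *
        of ![equivTuple R a, equivTuple R b, equivTuple R c, equivTuple R d] i j := by
    ext i j
    fin_cases i <;> fin_cases j <;> simp [equivTuple_apply]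
  rw [coordDet, hrows, det_mul_column, Fin.prod_univ_four, coordDet]
  simp [sq]

theorem coordDet_mul_left_mul_left [IsDomain R] {α : ℍ[R]} (hα : normSq α ≠ 0)
    (β γ δ x : ℍ[R]) :
    coordDet (α * β) (α * γ) δ x = coordDet β γ (star α * δ) (star α * x) := by
  have hnormSq : ∀ q, normSq α • q = α * (star α * q) := fun q => by
    rw [← mul_assoc, self_mul_star, coe_mul_eq_smul]
  apply mul_left_cancel₀ (pow_ne_zero 2 hα)
  rw [← coordDet_smul_smul, hnormSq, hnormSq, coordDet_mul_left]

theorem exists_eq_mul_of_re_mul_star_eq_coordDet [LinearOrder R] [IsStrictOrderedRing R]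
    {α β γ δ ε : ℍ[R]} (hε : ∀ x, (ε * star x).re = coordDet (α * β) (α * γ) δ x) :
    ∃ l, ε = α * l := by
  obtain rfl | hα := eq_or_ne α 0
  · refine ⟨0, eq_of_re_mul_star fun x => ?_⟩
    simp [hε, coordDet_zero_left]
  · refine ⟨vectorProduct β γ (star α * δ), eq_of_re_mul_star fun x => ?_⟩
    rw [hε, coordDet_mul_left_mul_left (normSq_ne_zero.mpr hα), ← re_vectorProduct_mul_star,
      star_mul, star_star, ← mul_assoc, re_mul_comm, mul_assoc]

end Quaternion

theorem vectorProduct_left_multiples_is_right_multiple (α β γ δ ε : Quaternion ℤ)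
    (hε : ∀ x : Quaternion ℤ,
      (ε * star x).re = (Matrix.of ![coords (α * β), coords (α * γ), coords δ, coords x]).det) :
    ∃ l : Quaternion ℤ, ε = α * l :=
  Quaternion.exists_eq_mul_of_re_mul_star_eq_coordDet hε
end
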